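/- Let A be a finite-dimensional symmetric algebra over a field and N > 2. Then the N-singularity category D^s_N(A) is weakly (−2, N)-Calabi-Yau: the N-th power of the Serre functor [−1]∘ν_A is isomorphic to Σ^{−2}, where Σ is the suspension of D^s_N(A). -/

import Mathlib

open CategoryTheory

universe v u

/-- The `m`-th iterate of an endofunctor. -/
def CategoryTheory.Functor.iter {T : Type u} [Category.{v} T] (F : T ⥤ T) : ℕ → (T ⥤ T)
  | 0 => 𝟭 T
  | (m + 1) => Functor.iter F m ⋙ F

/-! Since `ν ≅ 𝟭`, the `N`-th power of the Serre functor `[-1] ∘ ν` is the shift `[-N]`,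
and `Σ⁻²` is `[-N]` too, being the inverse of `Σ² ≅ [N]`. -/

namespace CategoryTheory

variable {C : Type u} [Category.{v} C]

def Functor.iterCongr {F G : C ⥤ C} (e : F ≅ G) : (m : ℕ) → F.iter m ≅ G.iter m
  | 0 => Iso.refl _
  | m + 1 => NatIso.hcomp (iterCongr e m) e

def shiftFunctorIterIso {A : Type*} [AddMonoid A] [HasShift C A] (a : A) :
    (m : ℕ) → (shiftFunctor C a).iter m ≅ shiftFunctor C (m • a)
  | 0 => (shiftFunctorZero' C (0 • a) (zero_nsmul a)).symm
  | m + 1 => Functor.isoWhiskerRight (shiftFunctorIterIso a m) _ ≪≫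
      (shiftFunctorAdd' C (m • a) a ((m + 1) • a) (succ_nsmul a m).symm).symm

end CategoryTheory

theorem singularity_category_symmetric_calabi_yau_general
    {T : Type u} [Category.{v} T] [HasShift T ℤ]
    (N : ℕ)
    (Sus : T ≌ T)
    (hSus : Sus.functor ⋙ Sus.functor ≅ shiftFunctor T (N : ℤ))
    (nu : T ≌ T)
    (hnu : nu.functor ≅ 𝟭 T) :
    Nonempty
      ((nu.functor ⋙ shiftFunctor T (-1 : ℤ)).iter N ≅ Sus.inverse ⋙ Sus.inverse) := by
  have serre_iso_shift : nu.functor ⋙ shiftFunctor T (-1 : ℤ) ≅ shiftFunctor T (-1 : ℤ) :=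
    Functor.isoWhiskerRight hnu _ ≪≫ Functor.leftUnitor _
  have inverse_sq_iso_shift : Sus.inverse ⋙ Sus.inverse ≅ shiftFunctor T (N • (-1 : ℤ)) :=
    Iso.isoInverseOfIsoFunctor (G := Sus.trans Sus)
      (G' := shiftEquiv' T (N : ℤ) (N • (-1 : ℤ)) (by simp)) hSus
  exact ⟨Functor.iterCongr serre_iso_shift N ≪≫ shiftFunctorIterIso (-1 : ℤ) N ≪≫
    inverse_sq_iso_shift.symm⟩

/-- Let `A` be a finite-dimensional symmetric algebra over a field and
`N > 2`.  Then the `N`-singularity category `D^s_N(A)` is weakly `(−2, N)`-Calabi–Yau: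
the `N`-th power of the Serre functor `[−1] ∘ ν_A` is isomorphic to `Σ^{−2}`, where `Σ`
is the suspension of `D^s_N(A)`.

Here `T` stands for `D^s_N(A)`, which carries a shift by `ℤ` (the shift `[1]` of
`N`-complexes), a suspension `Σ` (the triangulated suspension, an autoequivalence
satisfying `Σ² ≅ [N]`), and the Nakayama functor `ν` which, since `A` is symmetric, is
isomorphic to the identity; `[−1] ∘ ν` is a Serre functor on `T`. -/
theorem singularity_category_symmetric_calabi_yau
    {T : Type u} [Category.{v} T] [HasShift T ℤ]
    (N : ℕ) (hN : 2 < N)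
    (Sus : T ≌ T)
    (hSus : Sus.functor ⋙ Sus.functor ≅ shiftFunctor T (N : ℤ))
    (nu : T ≌ T)
    (hnu : nu.functor ≅ 𝟭 T) :
    Nonempty
      ((nu.functor ⋙ shiftFunctor T (-1 : ℤ)).iter N ≅ Sus.inverse ⋙ Sus.inverse) :=
  singularity_category_symmetric_calabi_yau_general N Sus hSus nu hnu
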